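/- arXiv:1103.0023 — 2 statements merged into one kernel-verified Lean document; each statement's English description precedes it below -/
import Mathlib

section
/- With w_ε^α = u_ε^α - v_ε^α - ε χ_k^{αβ}(x/ε) ∂v_ε^β/∂x_k, the conormal derivative satisfies the identity: n_i a_{ij}^{αβ}(x/ε) ∂w_ε^β/∂x_j = n_i a_{ij}^{αβ}(x/ε) ∂u_ε^β/∂x_j - n_i â_{ij}^{αβ} ∂v_ε^β/∂x_j + (ε/2){n_i ∂/∂x_j - n_j ∂/∂x_i}{Ψ_{jik}^{αγ}(x/ε) ∂v_ε^γ/∂x_k} - ε n_i b_{ijk}^{αγ}(x/ε) ∂²v_ε^γ/(∂x_j ∂x_k), where the middle term involves only tangential derivatives. -/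
/-!
By the chain rule, differentiating `ε χ(x/ε) ∂v` produces `(∂χ)(x/ε) ∂v` at order one, so the
conormal derivative of `w_ε` is that of `u_ε` minus `n_i (a_{ik} + a_{ij} ∂_j χ_k)(x/ε) ∂_k v_ε
= n_i (â_{ik} - Φ_{ik}(x/ε)) ∂_k v_ε`, minus `ε n_i a_{ij} χ_k ∂_j ∂_k v_ε`. Writing
`Φ_{ik} = ∂_j Ψ_{jik}` and using the product rule backwards,
`n_i Φ_{ik}(x/ε) ∂_k v = ε n_i ∂_j (Ψ_{jik}(x/ε) ∂_k v) - ε n_i Ψ_{jik}(x/ε) ∂_j ∂_k v`, and the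
antisymmetry of `Ψ` in `(j, i)` turns `n_i ∂_j` into the tangential derivative
`(n_i ∂_j - n_j ∂_i) / 2`.
-/

open MeasureTheory

noncomputable def pd {d : ℕ} (i : Fin d) (f : (Fin d → ℝ) → ℝ) (x : Fin d → ℝ) : ℝ :=
  fderiv ℝ f x (Pi.single i 1)

def Zper {d : ℕ} (f : (Fin d → ℝ) → ℝ) : Prop :=
  ∀ (x : Fin d → ℝ) (z : Fin d → ℤ), f (x + fun i => (z i : ℝ)) = f x

section PartialDerivatives

variable {d : ℕ} {f g : (Fin d → ℝ) → ℝ} {x : Fin d → ℝ}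

lemma pd_sub (j : Fin d) (hf : DifferentiableAt ℝ f x) (hg : DifferentiableAt ℝ g x) :
    pd j (fun y => f y - g y) x = pd j f x - pd j g x := by
  simp [pd, fderiv_fun_sub hf hg]

lemma pd_neg (j : Fin d) :
    pd j (fun y => -f y) x = -pd j f x := by
  simp [pd]

lemma pd_const_mul (j : Fin d) (c : ℝ) (hf : DifferentiableAt ℝ f x) :
    pd j (fun y => c * f y) x = c * pd j f x := by
  simp [pd, fderiv_const_mul hf c]

lemma pd_mul (j : Fin d) (hf : DifferentiableAt ℝ f x) (hg : DifferentiableAt ℝ g x) :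
    pd j (fun y => f y * g y) x = pd j f x * g x + f x * pd j g x := by
  simp [pd, fderiv_fun_mul hf hg]
  ring

lemma pd_sum {ι : Type*} (s : Finset ι) (j : Fin d) (F : ι → (Fin d → ℝ) → ℝ)
    (hF : ∀ i ∈ s, DifferentiableAt ℝ (F i) x) :
    pd j (fun y => ∑ i ∈ s, F i y) x = ∑ i ∈ s, pd j (F i) x := by
  simp [pd, fderiv_fun_sum hF]

lemma pd_comp_smul (j : Fin d) (c : ℝ) :
    pd j (fun y => f (c • y)) x = c * pd j f (c • x) := by
  simp [pd, fderiv_comp_smul]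

lemma pd_sum_sum_comp_smul_mul {ι κ : Type*} [Fintype ι] [Fintype κ] (l : Fin d) (c : ℝ)
    (F G : ι → κ → (Fin d → ℝ) → ℝ) (hF : ∀ k γ, DifferentiableAt ℝ (F k γ) (c • x))
    (hG : ∀ k γ, DifferentiableAt ℝ (G k γ) x) :
    pd l (fun y => ∑ k, ∑ γ, F k γ (c • y) * G k γ y) x
      = ∑ k, ∑ γ, (c * pd l (F k γ) (c • x) * G k γ x + F k γ (c • x) * pd l (G k γ) x) := by
  have hFc : ∀ k γ, DifferentiableAt ℝ (fun y => F k γ (c • y)) x := fun k γ =>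
    (hF k γ).comp x (differentiableAt_id.const_smul c)
  rw [pd_sum _ _ _ fun k _ => .fun_sum fun γ _ => (hFc k γ).fun_mul (hG k γ)]
  refine Finset.sum_congr rfl fun k _ => ?_
  rw [pd_sum _ _ _ fun γ _ => (hFc k γ).fun_mul (hG k γ)]
  refine Finset.sum_congr rfl fun γ _ => ?_
  rw [pd_mul l (hFc k γ) (hG k γ), pd_comp_smul]

lemma ContDiff.differentiable_pd (hf : ContDiff ℝ 2 f) (k : Fin d) :
    Differentiable ℝ (pd k f) :=
  ((hf.fderiv_right (m := 1) (by norm_num)).clm_apply contDiff_const).differentiable one_ne_zero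

end PartialDerivatives

lemma sum_sum_comm_sum_sum {M α β γ δ : Type*} [AddCommMonoid M] [Fintype α] [Fintype β]
    [Fintype γ] [Fintype δ] (f : α → β → γ → δ → M) :
    ∑ a, ∑ b, ∑ c, ∑ e, f a b c e = ∑ c, ∑ e, ∑ a, ∑ b, f a b c e := by
  simpa only [Fintype.sum_prod_type] using
    Finset.sum_comm (s := Finset.univ) (t := Finset.univ)
      (f := fun (p : α × β) (q : γ × δ) => f p.1 p.2 q.1 q.2)

lemma sum_comm_sum_sum {M α γ δ : Type*} [AddCommMonoid M] [Fintype α]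
    [Fintype γ] [Fintype δ] (f : α → γ → δ → M) :
    ∑ a, ∑ c, ∑ e, f a c e = ∑ c, ∑ e, ∑ a, f a c e := by
  simpa only [Fintype.sum_prod_type] using
    Finset.sum_comm (s := Finset.univ) (t := Finset.univ)
      (f := fun (a : α) (q : γ × δ) => f a q.1 q.2)

lemma sum_sum_pd_sub_of_antisymm {d : ℕ} (n : Fin d → ℝ) (G : Fin d → Fin d → (Fin d → ℝ) → ℝ)
    (hG : ∀ i j y, G j i y = -G i j y) (x : Fin d → ℝ) :
    ∑ i, ∑ j, (n i * pd j (G j i) x - n j * pd i (G j i) x)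
      = 2 * ∑ i, ∑ j, n i * pd j (G j i) x := by
  have hswap : ∑ i, ∑ j, n j * pd i (G j i) x = -∑ i, ∑ j, n i * pd j (G j i) x := by
    calc ∑ i, ∑ j, n j * pd i (G j i) x = ∑ i, ∑ j, n i * pd j (G i j) x := Finset.sum_comm
      _ = ∑ i, ∑ j, -(n i * pd j (G j i) x) :=
        Finset.sum_congr rfl fun i _ => Finset.sum_congr rfl fun j _ => by
          rw [show G i j = fun y => -G j i y from funext (hG j i), pd_neg, mul_neg]
      _ = -∑ i, ∑ j, n i * pd j (G j i) x := by simp only [Finset.sum_neg_distrib]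
  simp only [Finset.sum_sub_distrib, hswap]
  ring

section TwoScale

variable {d : ℕ} {ε : ℝ} {x : Fin d → ℝ} {ι κ : Type*} [Fintype ι] [Fintype κ]

lemma pd_sub_sub_corrector (hε : ε ≠ 0) (j : Fin d) {u v : (Fin d → ℝ) → ℝ}
    (χ g : κ → ι → (Fin d → ℝ) → ℝ) (hu : DifferentiableAt ℝ u x)
    (hv : DifferentiableAt ℝ v x) (hχ : ∀ k γ, DifferentiableAt ℝ (χ k γ) (ε⁻¹ • x))
    (hg : ∀ k γ, DifferentiableAt ℝ (g k γ) x) :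
    pd j (fun y => u y - v y - ε * ∑ k, ∑ γ, χ k γ (ε⁻¹ • y) * g k γ y) x
      = pd j u x - pd j v x - ∑ k, ∑ γ, pd j (χ k γ) (ε⁻¹ • x) * g k γ x
        - ε * ∑ k, ∑ γ, χ k γ (ε⁻¹ • x) * pd j (g k γ) x := by
  have hS : DifferentiableAt ℝ (fun y => ∑ k, ∑ γ, χ k γ (ε⁻¹ • y) * g k γ y) x :=
    .fun_sum fun k _ => .fun_sum fun γ _ =>
      ((hχ k γ).comp x (differentiableAt_id.const_smul ε⁻¹)).fun_mul (hg k γ)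
  rw [pd_sub j (hu.fun_sub hv) (hS.const_mul ε), pd_sub j hu hv, pd_const_mul j ε hS,
    pd_sum_sum_comp_smul_mul j ε⁻¹ χ g hχ hg]
  simp only [Finset.sum_add_distrib, Finset.mul_sum, mul_add, ← mul_assoc, mul_inv_cancel₀ hε,
    one_mul]
  ring

lemma sum_conormal_pd_sub_sub_corrector {ν : Type*} [Fintype ν] (hε : ε ≠ 0) (n : Fin d → ℝ)
    (A : Fin d → Fin d → ι → ℝ) (u v : ι → (Fin d → ℝ) → ℝ)
    (χ : κ → ι → ν → (Fin d → ℝ) → ℝ) (g : κ → ν → (Fin d → ℝ) → ℝ)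
    (hu : ∀ β, DifferentiableAt ℝ (u β) x) (hv : ∀ β, DifferentiableAt ℝ (v β) x)
    (hχ : ∀ k β γ, DifferentiableAt ℝ (χ k β γ) (ε⁻¹ • x))
    (hg : ∀ k γ, DifferentiableAt ℝ (g k γ) x) :
    ∑ i, ∑ j, ∑ β, n i * A i j β *
        pd j (fun y => u β y - v β y - ε * ∑ k, ∑ γ, χ k β γ (ε⁻¹ • y) * g k γ y) x
      = ∑ i, ∑ j, ∑ β, n i * A i j β * pd j (u β) x
        - ∑ i, ∑ j, ∑ β, n i * A i j β * pd j (v β) x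
        - ∑ i, ∑ k, ∑ γ, n i * (∑ j, ∑ β, A i j β * pd j (χ k β γ) (ε⁻¹ • x)) * g k γ x
        - ε * ∑ i, ∑ j, ∑ k, ∑ γ,
            n i * (∑ β, A i j β * χ k β γ (ε⁻¹ • x)) * pd j (g k γ) x := by
  have hterm : ∀ i j β, n i * A i j β *
      pd j (fun y => u β y - v β y - ε * ∑ k, ∑ γ, χ k β γ (ε⁻¹ • y) * g k γ y) x
      = n i * A i j β * pd j (u β) x - n i * A i j β * pd j (v β) x
        - n i * A i j β * ∑ k, ∑ γ, pd j (χ k β γ) (ε⁻¹ • x) * g k γ x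
        - ε * (n i * A i j β * ∑ k, ∑ γ, χ k β γ (ε⁻¹ • x) * pd j (g k γ) x) := by
    intro i j β
    rw [pd_sub_sub_corrector hε j (χ · β) g (hu β) (hv β) (hχ · β) hg]
    ring
  simp only [hterm, Finset.sum_sub_distrib]
  simp only [Finset.mul_sum, Finset.sum_mul, mul_assoc]
  congr 1
  · congr 1
    exact Finset.sum_congr rfl fun i _ => sum_sum_comm_sum_sum _
  · exact Finset.sum_congr rfl fun i _ => Finset.sum_congr rfl fun j _ => sum_comm_sum_sum _

lemma sum_tangential_pd_eq (hε : ε ≠ 0) (n : Fin d → ℝ)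
    (Ψ : Fin d → Fin d → κ → ι → (Fin d → ℝ) → ℝ) (g : κ → ι → (Fin d → ℝ) → ℝ)
    (hΨanti : ∀ j i k γ y, Ψ j i k γ y = -Ψ i j k γ y)
    (hΨ : ∀ j i k γ, DifferentiableAt ℝ (Ψ j i k γ) (ε⁻¹ • x))
    (hg : ∀ k γ, DifferentiableAt ℝ (g k γ) x) :
    ε / 2 * ∑ i, ∑ j,
        (n i * pd j (fun y => ∑ k, ∑ γ, Ψ j i k γ (ε⁻¹ • y) * g k γ y) x
          - n j * pd i (fun y => ∑ k, ∑ γ, Ψ j i k γ (ε⁻¹ • y) * g k γ y) x)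
      = ∑ i, ∑ k, ∑ γ, n i * (∑ j, pd j (Ψ j i k γ) (ε⁻¹ • x)) * g k γ x
        + ε * ∑ i, ∑ j, ∑ k, ∑ γ, n i * Ψ j i k γ (ε⁻¹ • x) * pd j (g k γ) x := by
  have hterm : ∀ i j k γ, ε * (n i * (ε⁻¹ * pd j (Ψ j i k γ) (ε⁻¹ • x) * g k γ x
      + Ψ j i k γ (ε⁻¹ • x) * pd j (g k γ) x))
      = n i * pd j (Ψ j i k γ) (ε⁻¹ • x) * g k γ x
        + ε * (n i * Ψ j i k γ (ε⁻¹ • x) * pd j (g k γ) x) := by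
    intro i j k γ
    field_simp
  rw [sum_sum_pd_sub_of_antisymm n (fun j i y => ∑ k, ∑ γ, Ψ j i k γ (ε⁻¹ • y) * g k γ y)
    fun i j y => by simp only [hΨanti j i, neg_mul, Finset.sum_neg_distrib],
    ← mul_assoc, div_mul_cancel₀ ε two_ne_zero]
  simp only [pd_sum_sum_comp_smul_mul _ _ _ _ (hΨ _ _) hg, Finset.mul_sum]
  simp only [hterm, Finset.sum_add_distrib, Finset.sum_mul]
  congr 1
  exact Finset.sum_congr rfl fun i _ => sum_comm_sum_sum _

end TwoScale

theorem conormal_derivative_identity_general (d m : ℕ) (ε : ℝ) (hε : 0 < ε)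
    (a : Fin d → Fin d → Fin m → Fin m → (Fin d → ℝ) → ℝ)
    (ahat : Fin d → Fin d → Fin m → Fin m → ℝ)
    (χ : Fin d → Fin m → Fin m → (Fin d → ℝ) → ℝ)
    (Ψ : Fin d → Fin d → Fin d → Fin m → Fin m → (Fin d → ℝ) → ℝ)
    (u v : Fin m → (Fin d → ℝ) → ℝ)
    (hχsmooth : ∀ k α β, ContDiff ℝ (⊤ : ℕ∞) (χ k α β))
    (hΨsmooth : ∀ j i k α γ, ContDiff ℝ (⊤ : ℕ∞) (Ψ j i k α γ))
    -- Ψ is antisymmetric in its first two indices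
    (hΨanti : ∀ j i k α γ y, Ψ j i k α γ y = - Ψ i j k α γ y)
    -- Φ_{ik}^{αγ} = ∂_j Ψ_{jik}^{αγ}, with Φ as in (3.4)
    (hΨΦ : ∀ i k α γ y,
      ∑ j, pd j (Ψ j i k α γ) y
        = ahat i k α γ - a i k α γ y - ∑ j, ∑ β, a i j α β y * pd j (χ k β γ) y)
    (husmooth : ∀ α, ContDiff ℝ 1 (u α))
    (hvsmooth : ∀ α, ContDiff ℝ 2 (v α)) :
    -- the identity of Lemma 5.1, pointwise for every x and any unit normal vector n
    ∀ (x : Fin d → ℝ) (n : Fin d → ℝ) (α : Fin m),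
      (∑ i, ∑ j, ∑ β, n i * a i j α β (ε⁻¹ • x) *
        pd j (fun y => u β y - v β y
          - ε * ∑ k, ∑ γ, χ k β γ (ε⁻¹ • y) * pd k (v γ) y) x)
      =
      (∑ i, ∑ j, ∑ β, n i * a i j α β (ε⁻¹ • x) * pd j (u β) x)
      - (∑ i, ∑ j, ∑ β, n i * ahat i j α β * pd j (v β) x)
      + (ε / 2) * (∑ i, ∑ j,
          (n i * pd j (fun y => ∑ k, ∑ γ, Ψ j i k α γ (ε⁻¹ • y) * pd k (v γ) y) x
         - n j * pd i (fun y => ∑ k, ∑ γ, Ψ j i k α γ (ε⁻¹ • y) * pd k (v γ) y) x))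
      - ε * (∑ i, ∑ j, ∑ k, ∑ γ, n i *
          (Ψ j i k α γ (ε⁻¹ • x)
            + ∑ β, a i j α β (ε⁻¹ • x) * χ k β γ (ε⁻¹ • x))
          * pd j (pd k (v γ)) x) := by
  intro x n α
  have hpdv : ∀ k γ, DifferentiableAt ℝ (pd k (v γ)) x := fun k γ =>
    ((hvsmooth γ).differentiable_pd k).differentiableAt
  rw [sum_conormal_pd_sub_sub_corrector hε.ne' n (fun i j β => a i j α β (ε⁻¹ • x)) u v χ
      (fun k γ => pd k (v γ)) (fun β => ((husmooth β).differentiable one_ne_zero).differentiableAt)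
      (fun β => ((hvsmooth β).differentiable two_ne_zero).differentiableAt)
      (fun k β γ => ((hχsmooth k β γ).differentiable (by simp)).differentiableAt) hpdv,
    sum_tangential_pd_eq hε.ne' n (fun j i k γ => Ψ j i k α γ) (fun k γ => pd k (v γ))
      (fun j i k γ => hΨanti j i k α γ)
      (fun j i k γ => ((hΨsmooth j i k α γ).differentiable (by simp)).differentiableAt) hpdv]
  simp only [hΨΦ, mul_sub, sub_mul, mul_add, add_mul, Finset.sum_sub_distrib,
    Finset.sum_add_distrib]
  ring

/-- Lemma 5.1: conormal derivative identity for
`w_ε^α = u_ε^α − v_ε^α − ε χ_k^{αβ}(x/ε) ∂_k v_ε^β`. -/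
theorem conormal_derivative_identity (d m : ℕ) (ε : ℝ) (hε : 0 < ε)
    (a : Fin d → Fin d → Fin m → Fin m → (Fin d → ℝ) → ℝ)
    (ahat : Fin d → Fin d → Fin m → Fin m → ℝ)
    (χ : Fin d → Fin m → Fin m → (Fin d → ℝ) → ℝ)
    (Ψ : Fin d → Fin d → Fin d → Fin m → Fin m → (Fin d → ℝ) → ℝ)
    (u v : Fin m → (Fin d → ℝ) → ℝ)
    (hasmooth : ∀ i j α β, ContDiff ℝ (⊤ : ℕ∞) (a i j α β))
    (haper : ∀ i j α β, Zper (a i j α β))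
    (hχsmooth : ∀ k α β, ContDiff ℝ (⊤ : ℕ∞) (χ k α β))
    (hχper : ∀ k α β, Zper (χ k α β))
    (hΨsmooth : ∀ j i k α γ, ContDiff ℝ (⊤ : ℕ∞) (Ψ j i k α γ))
    (hΨper : ∀ j i k α γ, Zper (Ψ j i k α γ))
    -- Ψ is antisymmetric in its first two indices
    (hΨanti : ∀ j i k α γ y, Ψ j i k α γ y = - Ψ i j k α γ y)
    -- Φ_{ik}^{αγ} = ∂_j Ψ_{jik}^{αγ}, with Φ as in (3.4)
    (hΨΦ : ∀ i k α γ y,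
      ∑ j, pd j (Ψ j i k α γ) y
        = ahat i k α γ - a i k α γ y - ∑ j, ∑ β, a i j α β y * pd j (χ k β γ) y)
    (husmooth : ∀ α, ContDiff ℝ 1 (u α))
    (hvsmooth : ∀ α, ContDiff ℝ 2 (v α)) :
    -- the identity of Lemma 5.1, pointwise for every x and any unit normal vector n
    ∀ (x : Fin d → ℝ) (n : Fin d → ℝ) (α : Fin m),
      (∑ i, ∑ j, ∑ β, n i * a i j α β (ε⁻¹ • x) *
        pd j (fun y => u β y - v β y
          - ε * ∑ k, ∑ γ, χ k β γ (ε⁻¹ • y) * pd k (v γ) y) x)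
      =
      (∑ i, ∑ j, ∑ β, n i * a i j α β (ε⁻¹ • x) * pd j (u β) x)
      - (∑ i, ∑ j, ∑ β, n i * ahat i j α β * pd j (v β) x)
      + (ε / 2) * (∑ i, ∑ j,
          (n i * pd j (fun y => ∑ k, ∑ γ, Ψ j i k α γ (ε⁻¹ • y) * pd k (v γ) y) x
         - n j * pd i (fun y => ∑ k, ∑ γ, Ψ j i k α γ (ε⁻¹ • y) * pd k (v γ) y) x))
      - ε * (∑ i, ∑ j, ∑ k, ∑ γ, n i *
          (Ψ j i k α γ (ε⁻¹ • x)
            + ∑ β, a i j α β (ε⁻¹ • x) * χ k β γ (ε⁻¹ • x))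
          * pd j (pd k (v γ)) x) :=
  conormal_derivative_identity_general d m ε hε a ahat χ Ψ u v hχsmooth hΨsmooth hΨanti hΨΦ husmooth
    hvsmooth
end

section
/- For any a ≥ 0, the function φ_a(t) = (ln(1/t + e^a))^a is decreasing on (0,∞) and the function t ↦ t·φ_a(t) is increasing on (0,∞). -/
/-!
With `L t = log (1/t + e^a)`, `L` decreases and stays above `a ≥ 0`, which gives the first claim.
For the second, compare logarithms: `log (t · L t ^ a) = log t + a log (L t)`. For `t ≤ s`,
`a (log L t - log L s) ≤ (a / L s) (L t - L s) ≤ L t - L s` by `log x ≤ x - 1` and `a < L s`,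
while `L t + log t = log (1 + e^a t)` increases in `t`, so `L t - L s ≤ log s - log t`.
-/

open Real Set

lemma lt_log_add_exp (a : ℝ) {x : ℝ} (hx : 0 < x) : a < log (x + exp a) :=
  calc a = log (exp a) := (log_exp a).symm
    _ < log (x + exp a) := log_lt_log (exp_pos a) (lt_add_of_pos_left _ hx)

lemma antitoneOn_log_inv_add {c : ℝ} (hc : 0 ≤ c) :
    AntitoneOn (fun t : ℝ => log (1 / t + c)) (Ioi 0) := by
  intro t (ht : 0 < t) s (hs : 0 < s) hts
  exact log_le_log (by positivity) (by gcongr)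

lemma monotoneOn_log_inv_add_add_log {c : ℝ} (hc : 0 ≤ c) :
    MonotoneOn (fun t : ℝ => log (1 / t + c) + log t) (Ioi 0) := by
  have key : ∀ t : ℝ, 0 < t → log (1 / t + c) + log t = log (1 + c * t) := by
    intro t ht
    rw [← log_mul (by positivity) ht.ne']
    field_simp
  intro t (ht : 0 < t) s (hs : 0 < s) hts
  simp only [key t ht, key s hs]
  exact log_le_log (by positivity) (by gcongr)

lemma mul_log_div_le_sub {a x y : ℝ} (ha : 0 ≤ a) (hy : 0 < y) (hay : a ≤ y) (hyx : y ≤ x) :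
    a * log (x / y) ≤ x - y :=
  calc a * log (x / y) ≤ a * (x / y - 1) := by
        gcongr; exact log_le_sub_one_of_pos (div_pos (hy.trans_le hyx) hy)
    _ ≤ y * (x / y - 1) := by
        gcongr; rw [sub_nonneg, one_le_div hy]; exact hyx
    _ = x - y := by field_simp

/-- for `a ≥ 0`, `φ_a(t) = (log(1/t + e^a))^a` is decreasing on `(0,∞)`
and `t ↦ t·φ_a(t)` is increasing on `(0,∞)`. -/
theorem phi_monotonicity (a : ℝ) (ha : 0 ≤ a) :
    AntitoneOn (fun t : ℝ => (Real.log (1 / t + Real.exp a)) ^ a) (Set.Ioi 0) ∧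
    MonotoneOn (fun t : ℝ => t * (Real.log (1 / t + Real.exp a)) ^ a) (Set.Ioi 0) := by
  set L : ℝ → ℝ := fun t => log (1 / t + exp a)
  have hL_anti : AntitoneOn L (Ioi 0) := antitoneOn_log_inv_add (exp_pos a).le
  have hL_gt (t : ℝ) (ht : t ∈ Ioi 0) : a < L t := lt_log_add_exp a (one_div_pos.mpr ht)
  have hL_pos (t : ℝ) (ht : t ∈ Ioi 0) : 0 < L t := ha.trans_lt (hL_gt t ht)
  refine ⟨fun t ht s hs hts => rpow_le_rpow (hL_pos s hs).le (hL_anti ht hs hts) ha, ?_⟩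
  have hpos (u : ℝ) (hu : u ∈ Ioi 0) : 0 < u * L u ^ a :=
    mul_pos hu (rpow_pos_of_pos (hL_pos u hu) a)
  have hlog (u : ℝ) (hu : u ∈ Ioi 0) : log (u * L u ^ a) = log u + a * log (L u) := by
    rw [log_mul (ne_of_gt hu) (rpow_pos_of_pos (hL_pos u hu) a).ne', log_rpow (hL_pos u hu)]
  intro t ht s hs hts
  have h_log_L : a * log (L t / L s) ≤ L t - L s :=
    mul_log_div_le_sub ha (hL_pos s hs) (hL_gt s hs).le (hL_anti ht hs hts)
  have h_log_t : L t + log t ≤ L s + log s :=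
    monotoneOn_log_inv_add_add_log (exp_pos a).le ht hs hts
  rw [log_div (hL_pos t ht).ne' (hL_pos s hs).ne'] at h_log_L
  rw [← log_le_log_iff (hpos t ht) (hpos s hs), hlog t ht, hlog s hs]
  linarith
end
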